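/- Let |ψ⟩ be a pure n-qubit state with stabilizer group G, and let h₀ = 𝟙, h₁, …, h_k be Hermitian Pauli operators with Tr(h_i ψ) ≠ 0 lying in pairwise distinct cosets of G (with h_iG ≠ −h_jG for i ≠ j) such that every Hermitian Pauli P with Tr(Pψ) ≠ 0 belongs to h_iG or −h_iG for some i. Fix a bipartition A|B. Then the 2-Rényi entanglement entropy satisfies S₂(ψ_A) = (n_A − |S_A|) − log₂( Σ_{i=0}^{k} δ_i · Tr(h_i ψ)² ), where δ_i ∈ {0,1} equals 1 if and only if there exists P ∈ G such that h_i·P acts as the identity on the B qubits (i.e., h_iP = Q_A ⊗ 𝟙_B for some matrix Q_A on the A qubits), with δ₀ = 1 by convention. -/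

import Mathlib

open scoped Matrix ComplexOrder ENNReal Classical

noncomputable section

abbrev QVec (n : ℕ) := (Fin n → Fin 2) → ℂ
abbrev QMat (n : ℕ) := Matrix (Fin n → Fin 2) (Fin n → Fin 2) ℂ

/-- `ψ` is a unit vector (a pure state). -/
def IsUnitVec {n : ℕ} (ψ : QVec n) : Prop := ∑ x, Complex.normSq (ψ x) = 1

/-- The ℓ² norm of a vector. -/
def vnorm {n : ℕ} (v : QVec n) : ℝ := Real.sqrt (∑ x, Complex.normSq (v x))

/-- The density matrix `|ψ⟩⟨ψ|`. -/
def dm {n : ℕ} (ψ : QVec n) : QMat n := Matrix.vecMulVec ψ (star ψ)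

/-- The four single-qubit Pauli matrices I, X, Y, Z. -/
def pauli1 : Fin 4 → Matrix (Fin 2) (Fin 2) ℂ :=
  ![1, !![0, 1; 1, 0], !![0, -Complex.I; Complex.I, 0], !![1, 0; 0, -1]]

/-- The `n`-qubit Pauli operator `P₁ ⊗ ⋯ ⊗ P_n` given by a string `p`. -/
def pauliOp {n : ℕ} (p : Fin n → Fin 4) : QMat n :=
  fun x y => ∏ j, pauli1 (p j) (x j) (y j)

/-- The `n`-qubit Pauli group: matrices `i^a · P₁ ⊗ ⋯ ⊗ P_n`. -/
def PauliGroup (n : ℕ) : Set (QMat n) :=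
  {M | ∃ (a : Fin 4) (p : Fin n → Fin 4), M = Complex.I ^ (a : ℕ) • pauliOp p}

/-- A Hermitian Pauli operator: `± P₁ ⊗ ⋯ ⊗ P_n`. -/
def IsHermPauli {n : ℕ} (M : QMat n) : Prop :=
  ∃ (s : ℂ) (p : Fin n → Fin 4), (s = 1 ∨ s = -1) ∧ M = s • pauliOp p

/-- The stabilizer group `G = {P ∈ 𝒫_n : P|ψ⟩ = |ψ⟩}` of a pure state. -/
def stabGroup {n : ℕ} (ψ : QVec n) : Set (QMat n) :=
  {P | P ∈ PauliGroup n ∧ P.mulVec ψ = ψ}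

/-- `M` is supported on the qubits in `A` (acts as the identity on the rest),
i.e. `M = f_A ⊗ 𝟙` for some matrix `f` on the `A` qubits. -/
def MatSupportedOn {n : ℕ} (A : Finset (Fin n)) (M : QMat n) : Prop :=
  ∃ f : ({j // j ∈ A} → Fin 2) → ({j // j ∈ A} → Fin 2) → ℂ,
    ∀ x y, M x y =
      if ∀ j ∉ A, x j = y j then f (fun j => x j.1) (fun j => y j.1) else 0

/-- The local stabilizer subgroup `G_A`: stabilizers acting as the identity outside `A`. -/
def localStab {n : ℕ} (ψ : QVec n) (A : Finset (Fin n)) : Set (QMat n) :=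
  {P | P ∈ stabGroup ψ ∧ MatSupportedOn A P}

/-- `log₂` of the cardinality of a set. -/
def logCard {α : Type*} (S : Set α) : ℝ := Real.logb 2 S.ncard

/-- The stabilizer entanglement `ℰ(ψ; A|B) = (|S| − |S_A| − |S_B|)/2` (with `B = Aᶜ`). -/
def stabEnt {n : ℕ} (ψ : QVec n) (A : Finset (Fin n)) : ℝ :=
  (logCard (stabGroup ψ) - logCard (localStab ψ A) - logCard (localStab ψ Aᶜ)) / 2

/-- Combine an assignment on `A` and on `Aᶜ` into one on all qubits. -/
def mergeFn {n : ℕ} (A : Finset (Fin n)) (x : {j // j ∈ A} → Fin 2)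
    (z : {j // j ∈ Aᶜ} → Fin 2) : Fin n → Fin 2 :=
  fun j => if h : j ∈ A then x ⟨j, h⟩ else z ⟨j, Finset.mem_compl.mpr h⟩

/-- The reduced density matrix `ψ_A = Tr_{Aᶜ} |ψ⟩⟨ψ|`. -/
def reducedDM {n : ℕ} (A : Finset (Fin n)) (ψ : QVec n) :
    Matrix ({j // j ∈ A} → Fin 2) ({j // j ∈ A} → Fin 2) ℂ :=
  fun x y => ∑ z : {j // j ∈ Aᶜ} → Fin 2, ψ (mergeFn A x z) * star (ψ (mergeFn A y z))

/-- The α-Rényi entropy (base 2) of a Hermitian matrix, defined through its eigenvalues: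
`S₀ = log₂ rank`, `S₁` the von Neumann entropy, `S_∞ = −log₂` (largest eigenvalue, which is
the operator norm for positive semidefinite matrices), and
`S_α = (1−α)⁻¹ log₂ Σ λ_i^α` otherwise. -/
def renyi {m : Type*} [Fintype m] [DecidableEq m] (α : ℝ≥0∞)
    (ρ : Matrix m m ℂ) : ℝ :=
  if h : ρ.IsHermitian then
    if α = 0 then Real.logb 2 (ρ.rank : ℝ)
    else if α = 1 then -∑ i, h.eigenvalues i * Real.logb 2 (h.eigenvalues i)
    else if α = ⊤ then -Real.logb 2 (⨆ i, h.eigenvalues i)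
    else (1 / (1 - α.toReal)) * Real.logb 2 (∑ i, h.eigenvalues i ^ α.toReal)
  else 0

def IsUnitary {n : ℕ} (U : QMat n) : Prop := U * Uᴴ = 1 ∧ Uᴴ * U = 1

/-- A Clifford unitary: a unitary whose conjugation action maps the Pauli group onto itself. -/
def IsClifford {n : ℕ} (U : QMat n) : Prop :=
  IsUnitary U ∧ (fun P => U * P * Uᴴ) '' PauliGroup n = PauliGroup n

/-- Amplitudes of the Bell pair `|φ₊⟩ = (|00⟩+|11⟩)/√2`. -/
def bellAmp (a b : Fin 2) : ℂ := if a = b then ((Real.sqrt 2 : ℝ) : ℂ)⁻¹ else 0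

/-- Trace out the last `m` qubits of a pure state on `n + m` qubits. -/
def traceOutLast {n m : ℕ} (Ψ : QVec (n + m)) : QMat n :=
  fun x y => ∑ z : Fin m → Fin 2,
    Ψ (Fin.append x z) * star (Ψ (Fin.append y z))

/-- `Tr √ρ` for a positive semidefinite matrix (junk value `0` otherwise). -/
def sqrtTrace {m : Type*} [Fintype m] [DecidableEq m] (ρ : Matrix m m ℂ) : ℝ :=
  if h : ρ.PosSemidef then
    ((h.1.eigenvectorUnitary : Matrix m m ℂ) * Matrix.diagonal (((↑) : ℝ → ℂ) ∘ Real.sqrt ∘ h.1.eigenvalues) *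
      (star h.1.eigenvectorUnitary : Matrix m m ℂ)).trace.re
  else 0

/-- `S_{1/2}(ψ_A) = 2 log₂ Tr √ψ_A`. -/
def sHalf {n : ℕ} (A : Finset (Fin n)) (ψ : QVec n) : ℝ :=
  2 * Real.logb 2 (sqrtTrace (reducedDM A ψ))

/-- The set `SEP^{(E)}(A;B)`: convex hull of pure states with `S_{1/2}` entanglement ≤ E. -/
def SEPE {n : ℕ} (A : Finset (Fin n)) (E : ℝ) : Set (QMat n) :=
  convexHull ℝ {ρ | ∃ ψ : QVec n, IsUnitVec ψ ∧ sHalf A ψ ≤ E ∧ ρ = dm ψ}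

/-- `ψ` is a product state across the bipartition `A | Aᶜ`. -/
def IsProdAcross {n : ℕ} (A : Finset (Fin n)) (ψ : QVec n) : Prop :=
  ∃ (f : ({j // j ∈ A} → Fin 2) → ℂ) (g : ({j // j ∈ Aᶜ} → Fin 2) → ℂ),
    ∀ x, ψ x = f (fun j => x j.1) * g (fun j => x j.1)

/-- The separable states across `A | Aᶜ`. -/
def SEPset {n : ℕ} (A : Finset (Fin n)) : Set (QMat n) :=
  convexHull ℝ {ρ | ∃ ψ : QVec n, IsUnitVec ψ ∧ IsProdAcross A ψ ∧ ρ = dm ψ}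

/-- The trace norm `‖X‖₁ = Tr √(XᴴX)` (sum of singular values). -/
def traceNorm {m : Type*} [Fintype m] [DecidableEq m] (X : Matrix m m ℂ) : ℝ :=
  sqrtTrace (Xᴴ * X)

end

/-!
Expanding `ψ_A` in the Pauli basis of the `A` qubits gives
`2^{n_A} Tr ψ_A² = Σ_P |Tr(P ψ)|²`, summed over the Pauli strings `P` supported on `A`.
By completeness, a string with `Tr(P ψ) ≠ 0` lies in exactly one signed coset `±h_i G`, and
then `|Tr(P ψ)| = |Tr(h_i ψ)|`. Such a coset contains strings supported on `A` iff `δ_i = 1`;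
in that case, for a supported element `M₀ = h_i Q₀`, left multiplication by `M₀` matches these
strings (up to sign) with `G_A`. Hence `2^{n_A} Tr ψ_A² = |G_A| Σ_i δ_i Tr(h_i ψ)²`, and the
formula follows by taking `-log₂`.
-/

noncomputable section

open Matrix Complex
open scoped Kronecker

theorem eq_or_eq_neg_iff_exists_units_smul {V : Type*} [AddCommGroup V] {x y : V} :
    x = y ∨ x = -y ↔ ∃ s : ℤˣ, x = s • y := by
  constructor
  · rintro (rfl | rfl)
    exacts [⟨1, (one_smul _ _).symm⟩, ⟨-1, by simp⟩]
  · rintro ⟨s, rfl⟩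
    rcases Int.units_eq_one_or s with rfl | rfl <;> simp

namespace Matrix

variable {ι m R : Type*} [Fintype ι]

def piTensor [CommMonoid R] (f : ι → Matrix m m R) : Matrix (ι → m) (ι → m) R :=
  of fun x y => ∏ j, f j (x j) (y j)

@[simp]
theorem piTensor_apply [CommMonoid R] (f : ι → Matrix m m R) (x y : ι → m) :
    piTensor f x y = ∏ j, f j (x j) (y j) := rfl

theorem piTensor_mul [DecidableEq ι] [Fintype m] [CommSemiring R] (f g : ι → Matrix m m R) :
    piTensor f * piTensor g = piTensor fun j => f j * g j := by
  ext x y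
  simp only [mul_apply, piTensor_apply, ← Finset.prod_mul_distrib, Fintype.prod_sum]

theorem piTensor_one [DecidableEq ι] [DecidableEq m] [CommSemiring R] :
    piTensor (fun _ : ι => (1 : Matrix m m R)) = 1 := by
  ext x y
  simp only [piTensor_apply, one_apply, Finset.prod_boole, Finset.mem_univ, true_implies,
    funext_iff]

theorem piTensor_smul [CommSemiring R] (c : ι → R) (f : ι → Matrix m m R) :
    piTensor (fun j => c j • f j) = (∏ j, c j) • piTensor f := by
  ext x y
  simp only [piTensor_apply, smul_apply, smul_eq_mul, Finset.prod_mul_distrib]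

theorem trace_piTensor [DecidableEq ι] [Fintype m] [CommSemiring R] (f : ι → Matrix m m R) :
    trace (piTensor f) = ∏ j, trace (f j) := by
  simp only [trace, diag_apply, piTensor_apply, Fintype.prod_sum]

theorem conjTranspose_piTensor [CommSemiring R] [StarRing R] (f : ι → Matrix m m R) :
    (piTensor f)ᴴ = piTensor fun j => (f j)ᴴ := by
  ext x y
  simp only [conjTranspose_apply, piTensor_apply, star_prod]

end Matrix

/-- Indices `0, 1, 2, 3` stand for `I, X, Y, Z`, and `pauliIdxMul` is their bitwise xor. -/
def pauliIdxMul : Fin 4 → Fin 4 → Fin 4 :=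
  ![![0, 1, 2, 3], ![1, 0, 3, 2], ![2, 3, 0, 1], ![3, 2, 1, 0]]

def pauliPhaseExp : Fin 4 → Fin 4 → ℕ :=
  ![![0, 0, 0, 0], ![0, 0, 1, 3], ![0, 3, 0, 1], ![0, 1, 3, 0]]

theorem pauli1_mul (a b : Fin 4) :
    pauli1 a * pauli1 b = I ^ pauliPhaseExp a b • pauli1 (pauliIdxMul a b) := by
  fin_cases a <;> fin_cases b <;>
    · ext i j
      fin_cases i <;> fin_cases j <;>
        simp [pauli1, pauliIdxMul, pauliPhaseExp, mul_apply, Fin.sum_univ_two, pow_succ]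

theorem pauliIdxMul_eq_zero_iff {a b : Fin 4} : pauliIdxMul a b = 0 ↔ a = b := by
  fin_cases a <;> fin_cases b <;> simp [pauliIdxMul]

theorem pauli1_mul_self (a : Fin 4) : pauli1 a * pauli1 a = 1 := by
  fin_cases a <;> simp [pauli1, ← Matrix.ext_iff, Fin.forall_fin_two, one_apply]

theorem pauli1_conjTranspose (a : Fin 4) : (pauli1 a)ᴴ = pauli1 a := by
  fin_cases a <;> simp [pauli1, ← Matrix.ext_iff, Fin.forall_fin_two]

theorem trace_pauli1 (a : Fin 4) : trace (pauli1 a) = if a = 0 then 2 else 0 := by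
  fin_cases a <;> simp [pauli1, trace, Fin.sum_univ_two]

theorem sum_pauli1_mul_star (s t s' t' : Fin 2) :
    ∑ a, pauli1 a s t * star (pauli1 a s' t') = if s = s' ∧ t = t' then 2 else 0 := by
  fin_cases s <;> fin_cases t <;> fin_cases s' <;> fin_cases t' <;>
    simp [pauli1, Fin.sum_univ_four] <;> norm_num

section PauliTensor

variable {ι : Type*} [Fintype ι]

def pauliTensor (p : ι → Fin 4) : Matrix (ι → Fin 2) (ι → Fin 2) ℂ :=
  piTensor fun j => pauli1 (p j)

theorem pauliOp_eq_pauliTensor {n : ℕ} (p : Fin n → Fin 4) : pauliOp p = pauliTensor p := rfl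

theorem isHermitian_pauliTensor (p : ι → Fin 4) : (pauliTensor p).IsHermitian := by
  simp only [IsHermitian, pauliTensor, conjTranspose_piTensor, pauli1_conjTranspose]

variable [DecidableEq ι]

theorem pauliTensor_zero : pauliTensor (0 : ι → Fin 4) = 1 :=
  piTensor_one

theorem pauliTensor_mul (p q : ι → Fin 4) :
    pauliTensor p * pauliTensor q =
      I ^ (∑ j, pauliPhaseExp (p j) (q j)) • pauliTensor fun j => pauliIdxMul (p j) (q j) := by
  simp only [pauliTensor, piTensor_mul, pauli1_mul, piTensor_smul, Finset.prod_pow_eq_pow_sum]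

theorem pauliTensor_mul_self (p : ι → Fin 4) : pauliTensor p * pauliTensor p = 1 := by
  simp only [pauliTensor, piTensor_mul, pauli1_mul_self, piTensor_one]

theorem pauliTensor_ne_zero (p : ι → Fin 4) : pauliTensor p ≠ 0 := fun h => by
  simpa [h] using pauliTensor_mul_self p

theorem trace_pauliTensor (p : ι → Fin 4) :
    trace (pauliTensor p) = if p = 0 then 2 ^ Fintype.card ι else 0 := by
  simp only [pauliTensor, trace_piTensor, trace_pauli1, Finset.prod_ite_zero, Finset.mem_univ,
    true_implies, Finset.prod_const, Finset.card_univ, funext_iff, Pi.zero_apply]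

theorem eq_zero_of_pauliTensor_eq_smul_one {p : ι → Fin 4} {c : ℂ}
    (h : pauliTensor p = c • 1) : p = 0 := by
  have hc : c * c = 1 := by
    simpa [h, smul_smul] using congrFun₂ (pauliTensor_mul_self p) 0 0
  have htr := trace_pauliTensor p
  rw [h, trace_smul, trace_one] at htr
  by_contra hp
  rw [if_neg hp, smul_eq_mul, mul_eq_zero] at htr
  rcases htr with h0 | h0
  · simp [h0] at hc
  · exact Fintype.card_ne_zero (α := ι → Fin 2) (by exact_mod_cast h0)

theorem eq_of_pauliTensor_eq_units_smul {p q : ι → Fin 4} {s : ℤˣ}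
    (h : pauliTensor p = s • pauliTensor q) : p = q := by
  obtain ⟨c, hc⟩ : ∃ c : ℂ, pauliTensor p * pauliTensor q = c • 1 := by
    rw [h, smul_mul_assoc, pauliTensor_mul_self]
    rcases Int.units_eq_one_or s with rfl | rfl
    exacts [⟨1, by simp⟩, ⟨-1, by simp⟩]
  rw [pauliTensor_mul] at hc
  have hI : I ^ (∑ j, pauliPhaseExp (p j) (q j)) ≠ 0 := pow_ne_zero _ I_ne_zero
  have h0 := eq_zero_of_pauliTensor_eq_smul_one (c := (I ^ _)⁻¹ * c)
    (by rw [mul_smul, ← hc, smul_smul, inv_mul_cancel₀ hI, one_smul])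
  funext j
  exact pauliIdxMul_eq_zero_iff.mp (congrFun h0 j)

theorem sum_pauliTensor_mul_star (x y x' y' : ι → Fin 2) :
    ∑ p : ι → Fin 4, pauliTensor p x y * star (pauliTensor p x' y') =
      if x = x' ∧ y = y' then 2 ^ Fintype.card ι else 0 := by
  simp only [pauliTensor, piTensor_apply, star_prod, ← Finset.prod_mul_distrib]
  rw [← Fintype.prod_sum fun j a => pauli1 a (x j) (y j) * star (pauli1 a (x' j) (y' j))]
  simp only [sum_pauli1_mul_star, Finset.prod_ite_zero, Finset.mem_univ, true_implies,
    Finset.prod_const, Finset.card_univ, funext_iff, forall_and]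

theorem sum_normSq_trace_pauliTensor_mul (ρ : Matrix (ι → Fin 2) (ι → Fin 2) ℂ) :
    ∑ p : ι → Fin 4, normSq (trace (pauliTensor p * ρ)) =
      2 ^ Fintype.card ι * ∑ x, ∑ y, normSq (ρ x y) := by
  have hexpand : ∀ p, (normSq (trace (pauliTensor p * ρ)) : ℂ) =
      ∑ q : ((ι → Fin 2) × (ι → Fin 2)) × ((ι → Fin 2) × (ι → Fin 2)),
        (pauliTensor p q.1.1 q.1.2 * star (pauliTensor p q.2.1 q.2.2)) *
          (ρ q.1.2 q.1.1 * star (ρ q.2.2 q.2.1)) := by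
    intro p
    simp only [← mul_conj, trace, diag_apply, mul_apply, ← Fintype.sum_prod_type', map_sum,
      Finset.sum_mul_sum, map_mul, Complex.star_def]
    exact Finset.sum_congr rfl fun _ _ => by ring
  apply Complex.ofReal_injective
  push_cast
  simp only [hexpand]
  rw [Finset.sum_comm]
  simp only [← Finset.sum_mul, sum_pauliTensor_mul_star, ← Prod.ext_iff, ite_mul, zero_mul]
  rw [Fintype.sum_prod_type]
  simp only [Finset.sum_ite_eq, Finset.mem_univ, if_true, ← Finset.mul_sum, Complex.star_def,
    mul_conj, Fintype.sum_prod_type]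
  rw [Finset.sum_comm]

end PauliTensor

section Support

variable {n : ℕ} {A : Finset (Fin n)}

@[simp]
theorem mergeFn_apply_of_mem (a : A → Fin 2) (z : (Aᶜ : Finset (Fin n)) → Fin 2) {j : Fin n}
    (hj : j ∈ A) : mergeFn A a z j = a ⟨j, hj⟩ :=
  dif_pos hj

@[simp]
theorem mergeFn_apply_of_notMem (a : A → Fin 2) (z : (Aᶜ : Finset (Fin n)) → Fin 2)
    {j : Fin n} (hj : j ∉ A) : mergeFn A a z j = z ⟨j, Finset.mem_compl.mpr hj⟩ :=
  dif_neg hj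

def splitEquiv (A : Finset (Fin n)) :
    ((A → Fin 2) × ((Aᶜ : Finset (Fin n)) → Fin 2)) ≃ (Fin n → Fin 2) where
  toFun az := mergeFn A az.1 az.2
  invFun x := (fun j => x j, fun j => x j)
  left_inv az := by
    ext j
    · simp
    · simp [Finset.mem_compl.mp j.2]
  right_inv x := by
    ext j
    by_cases hj : j ∈ A <;> simp [hj]

@[simp]
theorem splitEquiv_apply (az : (A → Fin 2) × ((Aᶜ : Finset (Fin n)) → Fin 2)) :
    splitEquiv A az = mergeFn A az.1 az.2 := rfl

theorem forall_notMem_eq_iff {x y : Fin n → Fin 2} :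
    (∀ j ∉ A, x j = y j) ↔ ((splitEquiv A).symm x).2 = ((splitEquiv A).symm y).2 := by
  simp [splitEquiv, funext_iff, Finset.mem_compl]

theorem submatrix_piTensor_splitEquiv {R : Type*} [CommMonoid R]
    (f : Fin n → Matrix (Fin 2) (Fin 2) R) :
    (piTensor f).submatrix (splitEquiv A) (splitEquiv A) =
      piTensor (fun j : A => f j) ⊗ₖ piTensor (fun j : (Aᶜ : Finset (Fin n)) => f j) := by
  ext ⟨a, z⟩ ⟨b, w⟩
  rw [submatrix_apply, kroneckerMap_apply, piTensor_apply, ← Finset.prod_mul_prod_compl A,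
    ← Finset.prod_coe_sort A, ← Finset.prod_coe_sort Aᶜ]
  congr 1 <;> refine Finset.prod_congr rfl fun j _ => ?_
  · simp
  · simp [Finset.mem_compl.mp j.2]

theorem matSupportedOn_iff {M : QMat n} :
    MatSupportedOn A M ↔ ∃ f, M.submatrix (splitEquiv A) (splitEquiv A) = f ⊗ₖ 1 := by
  constructor
  · rintro ⟨f, hf⟩
    refine ⟨of f, ?_⟩
    ext u v
    obtain ⟨x, rfl⟩ := (splitEquiv A).symm.surjective u
    obtain ⟨y, rfl⟩ := (splitEquiv A).symm.surjective v
    simp only [submatrix_apply, Equiv.apply_symm_apply, hf, forall_notMem_eq_iff,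
      kroneckerMap_apply, one_apply, mul_ite, mul_one, mul_zero]
    rfl
  · rintro ⟨f, hf⟩
    refine ⟨f, fun x y => ?_⟩
    have hxy := congrFun₂ hf ((splitEquiv A).symm x) ((splitEquiv A).symm y)
    rw [submatrix_apply, Equiv.apply_symm_apply, Equiv.apply_symm_apply] at hxy
    simp only [hxy, kroneckerMap_apply, one_apply, forall_notMem_eq_iff, mul_ite, mul_one,
      mul_zero]
    rfl

theorem matSupportedOn_one : MatSupportedOn A (1 : QMat n) :=
  matSupportedOn_iff.mpr ⟨1, by rw [submatrix_one_equiv, one_kronecker_one]⟩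

theorem MatSupportedOn.mul {M N : QMat n} (hM : MatSupportedOn A M) (hN : MatSupportedOn A N) :
    MatSupportedOn A (M * N) := by
  obtain ⟨f, hf⟩ := matSupportedOn_iff.mp hM
  obtain ⟨g, hg⟩ := matSupportedOn_iff.mp hN
  refine matSupportedOn_iff.mpr ⟨f * g, ?_⟩
  rw [← submatrix_mul_equiv _ _ _ (splitEquiv A), hf, hg, ← mul_kronecker_mul, one_mul]

theorem MatSupportedOn.smul {M : QMat n} (hM : MatSupportedOn A M) (c : ℂ) :
    MatSupportedOn A (c • M) := by
  obtain ⟨f, hf⟩ := matSupportedOn_iff.mp hM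
  exact matSupportedOn_iff.mpr ⟨c • f, by rw [smul_kronecker, ← hf]; rfl⟩

theorem MatSupportedOn.units_smul {M : QMat n} (hM : MatSupportedOn A M) (s : ℤˣ) :
    MatSupportedOn A (s • M) := by
  rcases Int.units_eq_one_or s with rfl | rfl
  exacts [by rwa [one_smul], by simpa using hM.smul (-1)]

theorem exists_eq_smul_one_of_kronecker_eq {α β K : Type*} [Field K] [DecidableEq β]
    {X : Matrix α α K} {Y : Matrix β β K} {F : Matrix α α K} (hX : X ≠ 0)
    (h : X ⊗ₖ Y = F ⊗ₖ 1) : ∃ c : K, Y = c • 1 := by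
  obtain ⟨a, b, hab⟩ : ∃ a b, X a b ≠ 0 := by
    by_contra! h0
    exact hX (Matrix.ext h0)
  refine ⟨F a b / X a b, Matrix.ext fun z w => ?_⟩
  have hzw := congrFun₂ h (a, z) (b, w)
  simp only [kroneckerMap_apply] at hzw
  rw [Matrix.smul_apply, smul_eq_mul, div_mul_eq_mul_div, ← hzw]
  field_simp

theorem submatrix_pauliOp_splitEquiv (p : Fin n → Fin 4) :
    (pauliOp p).submatrix (splitEquiv A) (splitEquiv A) =
      pauliTensor (fun j : A => p j) ⊗ₖ pauliTensor (fun j : (Aᶜ : Finset (Fin n)) => p j) :=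
  submatrix_piTensor_splitEquiv _

theorem submatrix_pauliOp_splitEquiv_of_forall_notMem {p : Fin n → Fin 4}
    (hp : ∀ j ∉ A, p j = 0) :
    (pauliOp p).submatrix (splitEquiv A) (splitEquiv A) =
      pauliTensor (fun j : A => p j) ⊗ₖ 1 := by
  have hAc : (fun j : (Aᶜ : Finset (Fin n)) => p j) = 0 :=
    funext fun j => hp j (Finset.mem_compl.mp j.2)
  rw [submatrix_pauliOp_splitEquiv, hAc, pauliTensor_zero]

theorem matSupportedOn_pauliOp_iff {p : Fin n → Fin 4} :
    MatSupportedOn A (pauliOp p) ↔ ∀ j ∉ A, p j = 0 := by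
  refine ⟨fun hp j hj => ?_, fun hp => matSupportedOn_iff.mpr ⟨_,
    submatrix_pauliOp_splitEquiv_of_forall_notMem hp⟩⟩
  obtain ⟨f, hf⟩ := matSupportedOn_iff.mp hp
  rw [submatrix_pauliOp_splitEquiv] at hf
  obtain ⟨c, hc⟩ := exists_eq_smul_one_of_kronecker_eq (pauliTensor_ne_zero _) hf
  exact congrFun (eq_zero_of_pauliTensor_eq_smul_one hc) ⟨j, Finset.mem_compl.mpr hj⟩

theorem trace_mul_dm_eq_trace_mul_reducedDM {M : QMat n}
    {f : Matrix (A → Fin 2) (A → Fin 2) ℂ}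
    (hM : M.submatrix (splitEquiv A) (splitEquiv A) = f ⊗ₖ 1) (ψ : QVec n) :
    trace (M * dm ψ) = trace (f * reducedDM A ψ) := by
  calc trace (M * dm ψ)
      = trace ((M * dm ψ).submatrix (splitEquiv A) (splitEquiv A)) :=
        (Equiv.sum_comp (splitEquiv A) fun x => (M * dm ψ) x x).symm
    _ = trace ((f ⊗ₖ 1) * (dm ψ).submatrix (splitEquiv A) (splitEquiv A)) := by
        rw [← hM, submatrix_mul_equiv]
    _ = trace (f * reducedDM A ψ) := by
        simp only [trace, diag_apply, mul_apply, Fintype.sum_prod_type, kroneckerMap_apply,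
          one_apply, mul_ite, mul_one, mul_zero, ite_mul, zero_mul, Finset.sum_ite_eq,
          Finset.mem_univ, if_true, reducedDM, dm, Finset.mul_sum, submatrix_apply,
          splitEquiv_apply, vecMulVec_apply, Pi.star_apply]
        exact Finset.sum_congr rfl fun _ _ => Finset.sum_comm

end Support

section Purity

variable {n : ℕ} (A : Finset (Fin n)) (ψ : QVec n)

def supportedStrings : Finset (Fin n → Fin 4) :=
  Finset.univ.filter fun p => ∀ j ∉ A, p j = 0

variable {A} in
@[simp]
theorem mem_supportedStrings {p : Fin n → Fin 4} :
    p ∈ supportedStrings A ↔ ∀ j ∉ A, p j = 0 := by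
  simp [supportedStrings]

theorem star_reducedDM_apply (x y : A → Fin 2) :
    star (reducedDM A ψ x y) = reducedDM A ψ y x := by
  simp only [reducedDM, star_sum, star_mul', star_star, mul_comm]

theorem re_trace_reducedDM_mul_self :
    (trace (reducedDM A ψ * reducedDM A ψ)).re = ∑ x, ∑ y, normSq (reducedDM A ψ x y) := by
  simp only [trace, diag_apply, mul_apply, Complex.re_sum]
  refine Finset.sum_congr rfl fun x _ => Finset.sum_congr rfl fun y _ => ?_
  rw [← star_reducedDM_apply A ψ x y, Complex.star_def, mul_conj, Complex.ofReal_re]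

theorem sum_normSq_trace_pauliOp_mul_dm :
    ∑ p ∈ supportedStrings A, normSq (trace (pauliOp p * dm ψ)) =
      2 ^ A.card * (trace (reducedDM A ψ * reducedDM A ψ)).re := by
  rw [re_trace_reducedDM_mul_self, ← Fintype.card_coe A, ← sum_normSq_trace_pauliTensor_mul]
  refine Finset.sum_nbij' (fun p j => p j) (fun q j => if hj : j ∈ A then q ⟨j, hj⟩ else 0)
    (by simp) (fun q _ => mem_supportedStrings.mpr fun j hj => dif_neg hj) ?_ (by simp) ?_
  · intro p hp
    funext j
    by_cases hj : j ∈ A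
    · simp [hj]
    · simp [hj, mem_supportedStrings.mp hp j hj]
  · intro p hp
    rw [trace_mul_dm_eq_trace_mul_reducedDM
      (submatrix_pauliOp_splitEquiv_of_forall_notMem (mem_supportedStrings.mp hp))]

end Purity

section Stabilizer

variable {n : ℕ} {ψ : QVec n}

theorem pauliOp_zero : pauliOp (0 : Fin n → Fin 4) = 1 :=
  pauliTensor_zero

theorem mul_mem_pauliGroup {M N : QMat n} (hM : M ∈ PauliGroup n) (hN : N ∈ PauliGroup n) :
    M * N ∈ PauliGroup n := by
  obtain ⟨a, p, rfl⟩ := hM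
  obtain ⟨b, q, rfl⟩ := hN
  refine ⟨⟨(a + b + ∑ j, pauliPhaseExp (p j) (q j)) % 4, Nat.mod_lt _ (by norm_num)⟩,
    fun j => pauliIdxMul (p j) (q j), ?_⟩
  rw [← I_pow_eq_pow_mod, smul_mul_smul_comm, pauliOp_eq_pauliTensor, pauliOp_eq_pauliTensor,
    pauliTensor_mul, smul_smul, ← pow_add, ← pow_add]
  rfl

theorem isHermPauli_iff {M : QMat n} :
    IsHermPauli M ↔ ∃ (s : ℤˣ) (p : Fin n → Fin 4), M = s • pauliOp p := by
  constructor
  · rintro ⟨s, p, rfl | rfl, rfl⟩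
    exacts [⟨1, p, by simp⟩, ⟨-1, p, by simp⟩]
  · rintro ⟨s, p, rfl⟩
    rcases Int.units_eq_one_or s with rfl | rfl
    exacts [⟨1, p, Or.inl rfl, by simp⟩, ⟨-1, p, Or.inr rfl, by simp⟩]

theorem isHermPauli_pauliOp (p : Fin n → Fin 4) : IsHermPauli (pauliOp p) :=
  isHermPauli_iff.mpr ⟨1, p, (one_smul _ _).symm⟩

theorem IsHermPauli.mem_pauliGroup {M : QMat n} (hM : IsHermPauli M) : M ∈ PauliGroup n := by
  obtain ⟨s, p, rfl | rfl, rfl⟩ := hM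
  exacts [⟨0, p, by simp⟩, ⟨2, p, by simp⟩]

theorem IsHermPauli.isHermitian {M : QMat n} (hM : IsHermPauli M) : M.IsHermitian := by
  obtain ⟨s, p, rfl | rfl, rfl⟩ := hM <;>
    simpa [pauliOp_eq_pauliTensor] using isHermitian_pauliTensor p

theorem IsHermPauli.mul_self {M : QMat n} (hM : IsHermPauli M) : M * M = 1 := by
  obtain ⟨s, p, rfl | rfl, rfl⟩ := hM <;>
    simpa [pauliOp_eq_pauliTensor] using pauliTensor_mul_self p

theorem star_trace_mul_of_isHermitian {m : Type*} [Fintype m] {X Y : Matrix m m ℂ}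
    (hX : X.IsHermitian) (hY : Y.IsHermitian) : star (trace (X * Y)) = trace (X * Y) := by
  rw [← trace_conjTranspose, conjTranspose_mul, hX.eq, hY.eq, trace_mul_comm]

theorem isHermPauli_of_mem_pauliGroup {M ρ : QMat n} (hM : M ∈ PauliGroup n)
    (hρ : ρ.IsHermitian) (hreal : star (trace (M * ρ)) = trace (M * ρ))
    (hnz : trace (M * ρ) ≠ 0) : IsHermPauli M := by
  obtain ⟨a, p, rfl⟩ := hM
  rw [smul_mul, trace_smul, smul_eq_mul, star_mul', pauliOp_eq_pauliTensor,
    star_trace_mul_of_isHermitian (isHermitian_pauliTensor p) hρ] at hreal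
  have hI : star (I ^ (a : ℕ)) = I ^ (a : ℕ) :=
    mul_right_cancel₀ (right_ne_zero_of_mul (by rwa [smul_mul, trace_smul] at hnz)) hreal
  fin_cases a
  · exact ⟨1, p, Or.inl rfl, by simp⟩
  · norm_num [Complex.ext_iff] at hI
  · exact ⟨-1, p, Or.inr rfl, by simp⟩
  · norm_num [pow_succ, Complex.ext_iff] at hI

theorem isHermitian_dm (ψ : QVec n) : (dm ψ).IsHermitian := by
  simp [IsHermitian, dm, conjTranspose_vecMulVec]

theorem trace_dm_ne_zero (hψ : ψ ≠ 0) : trace (dm ψ) ≠ 0 := by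
  rwa [dm, trace_vecMulVec, Ne, dotProduct_self_star_eq_zero]

theorem normSq_trace_mul_dm {H : QMat n} (hH : H.IsHermitian) :
    normSq (trace (H * dm ψ)) = (trace (H * dm ψ)).re ^ 2 := by
  have him : (trace (H * dm ψ)).im = 0 :=
    Complex.conj_eq_iff_im.mp (star_trace_mul_of_isHermitian hH (isHermitian_dm ψ))
  rw [normSq_apply, him, mul_zero, add_zero, sq]

theorem trace_mul_mul_dm_of_mem_stabGroup (M : QMat n) {Q : QMat n} (hQ : Q ∈ stabGroup ψ) :
    trace (M * Q * dm ψ) = trace (M * dm ψ) := by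
  rw [Matrix.mul_assoc, dm, mul_vecMulVec, hQ.2]

theorem one_mem_stabGroup : (1 : QMat n) ∈ stabGroup ψ :=
  ⟨⟨0, 0, by simp [pauliOp_zero]⟩, one_mulVec ψ⟩

theorem mul_mem_stabGroup {P Q : QMat n} (hP : P ∈ stabGroup ψ) (hQ : Q ∈ stabGroup ψ) :
    P * Q ∈ stabGroup ψ :=
  ⟨mul_mem_pauliGroup hP.1 hQ.1, by rw [← mulVec_mulVec, hQ.2, hP.2]⟩

theorem isHermPauli_mul_of_mem_stabGroup {H Q : QMat n} (hH : IsHermPauli H)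
    (hHψ : trace (H * dm ψ) ≠ 0) (hQ : Q ∈ stabGroup ψ) : IsHermPauli (H * Q) := by
  refine isHermPauli_of_mem_pauliGroup (mul_mem_pauliGroup hH.mem_pauliGroup hQ.1)
    (isHermitian_dm ψ) ?_ ?_ <;> rw [trace_mul_mul_dm_of_mem_stabGroup H hQ]
  exacts [star_trace_mul_of_isHermitian hH.isHermitian (isHermitian_dm ψ), hHψ]

theorem isHermPauli_of_mem_stabGroup (hψ : ψ ≠ 0) {Q : QMat n} (hQ : Q ∈ stabGroup ψ) :
    IsHermPauli Q := by
  have h1Q := isHermPauli_mul_of_mem_stabGroup (pauliOp_zero ▸ isHermPauli_pauliOp 0)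
    (by rw [Matrix.one_mul]; exact trace_dm_ne_zero hψ) hQ
  rwa [Matrix.one_mul] at h1Q

theorem neg_notMem_stabGroup (hψ : ψ ≠ 0) {Q : QMat n} (hQ : Q ∈ stabGroup ψ) :
    -Q ∉ stabGroup ψ := fun hQ' => by
  have h1 := trace_mul_mul_dm_of_mem_stabGroup 1 hQ
  have h2 := trace_mul_mul_dm_of_mem_stabGroup 1 hQ'
  rw [Matrix.one_mul, Matrix.one_mul] at h1 h2
  rw [Matrix.neg_mul, trace_neg, h1] at h2
  exact trace_dm_ne_zero hψ (by linear_combination -h2 / 2)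

def stabSign (ψ : QVec n) (X : QMat n) : QMat n :=
  if X ∈ stabGroup ψ then X else -X

theorem stabSign_units_smul (hψ : ψ ≠ 0) {M : QMat n} (hM : M ∈ stabGroup ψ) (s : ℤˣ) :
    stabSign ψ (s • M) = M := by
  rcases Int.units_eq_one_or s with rfl | rfl
  · simp [stabSign, hM]
  · simp [stabSign, neg_notMem_stabGroup hψ hM]

theorem mul_mul_mul_of_mem_stabGroup (hψ : ψ ≠ 0) (H : QMat n) {Q₀ : QMat n}
    (hQ₀ : Q₀ ∈ stabGroup ψ) (Q : QMat n) : H * Q₀ * (Q₀ * Q) = H * Q := by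
  rw [Matrix.mul_assoc, ← Matrix.mul_assoc Q₀,
    (isHermPauli_of_mem_stabGroup hψ hQ₀).mul_self, Matrix.one_mul]

theorem finite_localStab (ψ : QVec n) (A : Finset (Fin n)) : (localStab ψ A).Finite :=
  (Set.finite_range fun ap : Fin 4 × (Fin n → Fin 4) => I ^ (ap.1 : ℕ) • pauliOp ap.2).subset
    fun _ ⟨⟨⟨a, p, hM⟩, _⟩, _⟩ => ⟨(a, p), hM.symm⟩

end Stabilizer

section Coset

variable {n : ℕ} {ψ : QVec n} {A : Finset (Fin n)}

def cosetStrings (ψ : QVec n) (A : Finset (Fin n)) (H : QMat n) : Finset (Fin n → Fin 4) :=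
  (supportedStrings A).filter fun p =>
    ∃ Q ∈ stabGroup ψ, ∃ s : ℤˣ, pauliOp p = s • (H * Q)

theorem normSq_trace_of_mem_cosetStrings {H : QMat n} (hH : IsHermPauli H)
    {p : Fin n → Fin 4} (hp : p ∈ cosetStrings ψ A H) :
    normSq (trace (pauliOp p * dm ψ)) = (trace (H * dm ψ)).re ^ 2 := by
  obtain ⟨Q, hQ, s, hs⟩ := (Finset.mem_filter.mp hp).2
  rw [hs, smul_mul, trace_smul, trace_mul_mul_dm_of_mem_stabGroup H hQ,
    ← normSq_trace_mul_dm hH.isHermitian]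
  rcases Int.units_eq_one_or s with rfl | rfl <;> simp

theorem disjoint_cosetStrings (hψ : ψ ≠ 0) {H H' : QMat n}
    (hHH' : ∀ P ∈ stabGroup ψ, ∀ s : ℤˣ, H ≠ s • (H' * P)) :
    Disjoint (cosetStrings ψ A H) (cosetStrings ψ A H') := by
  refine Finset.disjoint_left.mpr fun p hp hp' => ?_
  obtain ⟨Q, hQ, s, hs⟩ := (Finset.mem_filter.mp hp).2
  obtain ⟨Q', hQ', s', hs'⟩ := (Finset.mem_filter.mp hp').2
  refine hHH' (Q' * Q) (mul_mem_stabGroup hQ' hQ) (s * s') ?_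
  calc H = s • (s • (H * Q)) * Q := by
        rw [smul_smul, Int.units_mul_self, one_smul, Matrix.mul_assoc,
          (isHermPauli_of_mem_stabGroup hψ hQ).mul_self, Matrix.mul_one]
    _ = (s * s') • (H' * (Q' * Q)) := by
        rw [← hs, hs', smul_mul_assoc, smul_mul_assoc, smul_smul, Matrix.mul_assoc]

theorem cosetStrings_eq_empty {H : QMat n}
    (hH : ¬ ∃ P ∈ stabGroup ψ, MatSupportedOn A (H * P)) : cosetStrings ψ A H = ∅ := by
  refine Finset.eq_empty_of_forall_notMem fun p hp => hH ?_
  obtain ⟨hpA, Q, hQ, s, hs⟩ := Finset.mem_filter.mp hp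
  refine ⟨Q, hQ, ?_⟩
  rw [← one_smul ℤˣ (H * Q), ← Int.units_mul_self s, ← smul_smul, ← hs]
  exact (matSupportedOn_pauliOp_iff.mpr (mem_supportedStrings.mp hpA)).units_smul s

theorem stabSign_mem_localStab_of_mem_cosetStrings (hψ : ψ ≠ 0) {H Q₀ : QMat n}
    (hH : IsHermPauli H) (hHψ : trace (H * dm ψ) ≠ 0) (hQ₀ : Q₀ ∈ stabGroup ψ)
    (hHQ₀ : MatSupportedOn A (H * Q₀)) {p : Fin n → Fin 4} (hp : p ∈ cosetStrings ψ A H) :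
    stabSign ψ (H * Q₀ * pauliOp p) ∈ localStab ψ A ∧
      ∃ s : ℤˣ, pauliOp p = s • (H * Q₀ * stabSign ψ (H * Q₀ * pauliOp p)) := by
  have hM₀ := (isHermPauli_mul_of_mem_stabGroup hH hHψ hQ₀).mul_self
  obtain ⟨hpA, Q, hQ, s, hs⟩ := Finset.mem_filter.mp hp
  have hM₀P : H * Q₀ * pauliOp p = s • (Q₀ * Q) := by
    rw [hs, ← mul_mul_mul_of_mem_stabGroup hψ H hQ₀ Q, mul_smul_comm, ← Matrix.mul_assoc,
      hM₀, Matrix.one_mul]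
  have hQ₀Q : Q₀ * Q = s • (H * Q₀ * pauliOp p) := by
    rw [hM₀P, smul_smul, Int.units_mul_self, one_smul]
  have hPA := matSupportedOn_pauliOp_iff.mpr (mem_supportedStrings.mp hpA)
  rw [hM₀P, stabSign_units_smul hψ (mul_mem_stabGroup hQ₀ hQ)]
  refine ⟨⟨mul_mem_stabGroup hQ₀ hQ, hQ₀Q ▸ (hHQ₀.mul hPA).units_smul s⟩, s, ?_⟩
  rw [hs, ← mul_mul_mul_of_mem_stabGroup hψ H hQ₀ Q]

theorem card_cosetStrings (hψ : ψ ≠ 0) {H Q₀ : QMat n} (hH : IsHermPauli H)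
    (hHψ : trace (H * dm ψ) ≠ 0) (hQ₀ : Q₀ ∈ stabGroup ψ)
    (hHQ₀ : MatSupportedOn A (H * Q₀)) :
    (cosetStrings ψ A H).card = (localStab ψ A).ncard := by
  have hM₀ := (isHermPauli_mul_of_mem_stabGroup hH hHψ hQ₀).mul_self
  have hg := fun p (hp : p ∈ cosetStrings ψ A H) =>
    stabSign_mem_localStab_of_mem_cosetStrings hψ hH hHψ hQ₀ hHQ₀ hp
  rw [← Set.ncard_coe_finset]
  refine Set.ncard_congr (fun p _ => stabSign ψ (H * Q₀ * pauliOp p)) (fun p hp => (hg p hp).1)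
    ?_ ?_
  · intro p p' hp hp' hpp'
    obtain ⟨-, s, hs⟩ := hg p hp
    obtain ⟨-, s', hs'⟩ := hg p' hp'
    refine eq_of_pauliTensor_eq_units_smul (s := s * s') ?_
    change pauliOp p = (s * s') • pauliOp p'
    rw [hs, hs', hpp', smul_smul, mul_assoc s s' s', Int.units_mul_self, mul_one]
  · rintro M ⟨hMG, hMA⟩
    obtain ⟨s, p, hp⟩ := isHermPauli_iff.mp
      (isHermPauli_mul_of_mem_stabGroup hH hHψ (mul_mem_stabGroup hQ₀ hMG))
    have hp' : pauliOp p = s • (H * Q₀ * M) := by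
      rw [Matrix.mul_assoc, hp, smul_smul, Int.units_mul_self, one_smul]
    have hpA : p ∈ supportedStrings A := mem_supportedStrings.mpr
      (matSupportedOn_pauliOp_iff.mp (hp' ▸ (hHQ₀.mul hMA).units_smul s))
    refine ⟨p, Finset.mem_filter.mpr ⟨hpA, Q₀ * M, mul_mem_stabGroup hQ₀ hMG, s,
      by rw [hp', Matrix.mul_assoc]⟩, ?_⟩
    rw [hp', mul_smul_comm, ← Matrix.mul_assoc, hM₀, Matrix.one_mul,
      stabSign_units_smul hψ hMG]

theorem sum_normSq_trace_cosetStrings (hψ : ψ ≠ 0) {H : QMat n} (hH : IsHermPauli H)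
    (hHψ : trace (H * dm ψ) ≠ 0) :
    ∑ p ∈ cosetStrings ψ A H, normSq (trace (pauliOp p * dm ψ)) =
      if ∃ P ∈ stabGroup ψ, MatSupportedOn A (H * P)
      then (localStab ψ A).ncard * (trace (H * dm ψ)).re ^ 2 else 0 := by
  split_ifs with hδ
  · obtain ⟨Q₀, hQ₀, hHQ₀⟩ := hδ
    rw [Finset.sum_congr rfl fun p hp => normSq_trace_of_mem_cosetStrings hH hp,
      Finset.sum_const, card_cosetStrings hψ hH hHψ hQ₀ hHQ₀, nsmul_eq_mul]
  · rw [cosetStrings_eq_empty hδ, Finset.sum_empty]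

theorem sum_normSq_trace_supportedStrings {ι : Type*} [Fintype ι] (hψ : ψ ≠ 0)
    (h : ι → QMat n) (hherm : ∀ i, IsHermPauli (h i)) (hnz : ∀ i, trace (h i * dm ψ) ≠ 0)
    (hdistinct : ∀ i j, i ≠ j →
      ∀ P ∈ stabGroup ψ, h i ≠ h j * P ∧ h i ≠ -(h j * P))
    (hcomplete : ∀ P : QMat n, IsHermPauli P → trace (P * dm ψ) ≠ 0 →
      ∃ i, ∃ Q ∈ stabGroup ψ, P = h i * Q ∨ P = -(h i * Q)) :
    ∑ p ∈ supportedStrings A, normSq (trace (pauliOp p * dm ψ)) =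
      (localStab ψ A).ncard * ∑ i, if ∃ P ∈ stabGroup ψ, MatSupportedOn A (h i * P)
        then (trace (h i * dm ψ)).re ^ 2 else 0 := by
  have hsub : Finset.univ.biUnion (fun i => cosetStrings ψ A (h i)) ⊆ supportedStrings A :=
    fun p hp => by
      obtain ⟨i, -, hpi⟩ := Finset.mem_biUnion.mp hp
      exact (Finset.mem_filter.mp hpi).1
  have hzero : ∀ p ∈ supportedStrings A,
      p ∉ Finset.univ.biUnion (fun i => cosetStrings ψ A (h i)) →
        normSq (trace (pauliOp p * dm ψ)) = 0 := by
    intro p hp hnot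
    by_contra hne
    obtain ⟨i, Q, hQ, hpQ⟩ :=
      hcomplete _ (isHermPauli_pauliOp p) fun h0 => hne (by rw [h0, map_zero])
    exact hnot (Finset.mem_biUnion.mpr ⟨i, Finset.mem_univ i, Finset.mem_filter.mpr
      ⟨hp, Q, hQ, eq_or_eq_neg_iff_exists_units_smul.mp hpQ⟩⟩)
  have hdisjoint : Set.PairwiseDisjoint (Finset.univ : Finset ι)
      fun i => cosetStrings ψ A (h i) := fun i _ j _ hij =>
    disjoint_cosetStrings hψ fun P hP s hs =>
      not_or.mpr (hdistinct i j hij P hP) (eq_or_eq_neg_iff_exists_units_smul.mpr ⟨s, hs⟩)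
  rw [← Finset.sum_subset hsub hzero, Finset.sum_biUnion hdisjoint, Finset.mul_sum]
  refine Finset.sum_congr rfl fun i _ => ?_
  rw [sum_normSq_trace_cosetStrings hψ (hherm i) (hnz i)]
  split_ifs <;> simp

end Coset

theorem neg_logb_eq_of_mul_eq {a : ℕ} {N S T : ℝ} (hN : 0 < N) (hS : 0 < S)
    (h : N * S = 2 ^ a * T) : -Real.logb 2 T = (a - Real.logb 2 N) - Real.logb 2 S := by
  rw [show T = N * S / 2 ^ a by rw [h]; field_simp, Real.logb_div (by positivity) (by positivity),
    Real.logb_mul hN.ne' hS.ne', Real.logb_pow, Real.logb_self_eq_one one_lt_two]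
  ring

theorem statement3_general (n k : ℕ) (ψ : QVec n)
    (A : Finset (Fin n))
    (h : Fin (k + 1) → QMat n)
    (h0 : h 0 = 1)
    (hherm : ∀ i, IsHermPauli (h i))
    (hnz : ∀ i, Matrix.trace (h i * dm ψ) ≠ 0)
    (hdistinct : ∀ i j, i ≠ j → ∀ P ∈ stabGroup ψ, h i ≠ h j * P ∧ h i ≠ -(h j * P))
    (hcomplete : ∀ P : QMat n, IsHermPauli P → Matrix.trace (P * dm ψ) ≠ 0 →
      ∃ i, ∃ Q ∈ stabGroup ψ, P = h i * Q ∨ P = -(h i * Q)) :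
    -Real.logb 2 (Matrix.trace (reducedDM A ψ * reducedDM A ψ)).re =
      ((A.card : ℝ) - logCard (localStab ψ A)) -
        Real.logb 2 (∑ i, if ∃ P ∈ stabGroup ψ, MatSupportedOn A (h i * P)
          then ((Matrix.trace (h i * dm ψ)).re) ^ 2 else 0) := by
  have hψ : ψ ≠ 0 := by
    rintro rfl
    exact hnz 0 (by simp [dm])
  have hpurity := sum_normSq_trace_pauliOp_mul_dm A ψ
  rw [sum_normSq_trace_supportedStrings hψ h hherm hnz hdistinct hcomplete] at hpurity
  refine neg_logb_eq_of_mul_eq ?_ ?_ hpurity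
  · exact_mod_cast (Set.ncard_pos (finite_localStab ψ A)).mpr
      ⟨1, one_mem_stabGroup, matSupportedOn_one⟩
  · have hδ₀ : MatSupportedOn A (h 0 * 1) := by
      rw [h0, Matrix.mul_one]
      exact matSupportedOn_one
    refine lt_of_lt_of_le ?_ (Finset.single_le_sum (fun i _ => ?_) (Finset.mem_univ 0))
    · rw [if_pos ⟨1, one_mem_stabGroup, hδ₀⟩, ← normSq_trace_mul_dm (hherm 0).isHermitian]
      exact normSq_pos.mpr (hnz 0)
    · split_ifs <;> positivity

/-- exact 2-Rényi entanglement entropy: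
`S₂(ψ_A) = (n_A − |S_A|) − log₂ Σ_i δ_i Tr(h_i ψ)²`. -/
theorem statement3 (n k : ℕ) (ψ : QVec n) (hψ : IsUnitVec ψ)
    (A : Finset (Fin n))
    (h : Fin (k + 1) → QMat n)
    (h0 : h 0 = 1)
    (hherm : ∀ i, IsHermPauli (h i))
    (hnz : ∀ i, Matrix.trace (h i * dm ψ) ≠ 0)
    (hdistinct : ∀ i j, i ≠ j → ∀ P ∈ stabGroup ψ, h i ≠ h j * P ∧ h i ≠ -(h j * P))
    (hcomplete : ∀ P : QMat n, IsHermPauli P → Matrix.trace (P * dm ψ) ≠ 0 →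
      ∃ i, ∃ Q ∈ stabGroup ψ, P = h i * Q ∨ P = -(h i * Q)) :
    -Real.logb 2 (Matrix.trace (reducedDM A ψ * reducedDM A ψ)).re =
      ((A.card : ℝ) - logCard (localStab ψ A)) -
        Real.logb 2 (∑ i, if ∃ P ∈ stabGroup ψ, MatSupportedOn A (h i * P)
          then ((Matrix.trace (h i * dm ψ)).re) ^ 2 else 0) :=
  statement3_general n k ψ A h h0 hherm hnz hdistinct hcomplete

end
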